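/- If sin∠(u_i, w_i) denotes the sine of the acute angle between the i-th blocks of block vectors u, w ∈ ℂ^{dn}, and ‖u_i‖₂ = ‖w_i‖₂ = 1, then sin²∠(u,w) ≥ sin²∠(u_i,w_i)/‖u‖₂², i.e., sin∠(u_i,w_i) ≤ ‖u‖₂ sin∠(u,w). -/

import Mathlib

open scoped BigOperators

/-- Euclidean norm of a finite complex vector. -/
noncomputable def cenorm {ι : Type*} [Fintype ι] (v : ι → ℂ) : ℝ :=
  Real.sqrt (∑ i, ‖v i‖ ^ 2)

/-- Standard Hermitian inner product `w* u` (conjugate-linear in `w`). -/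
noncomputable def cinner {ι : Type*} [Fintype ι] (w v : ι → ℂ) : ℂ :=
  ∑ i, (starRingEnd ℂ) (w i) * v i

/-- Sine of the acute angle between two vectors. -/
noncomputable def sinAngle {ι : Type*} [Fintype ι] (u w : ι → ℂ) : ℝ :=
  Real.sqrt (1 - ‖cinner w u‖ ^ 2 / (cenorm u ^ 2 * cenorm w ^ 2))

/-!
Since `‖w_i‖ = 1`, the triangle inequality over the blocks gives
`|⟨w,u⟩| ≤ |⟨w_i,u_i⟩|·‖w_i‖ + ∑_{j ≠ i} ‖u_j‖‖w_j‖`, so Cauchy–Schwarz in `ℝ^d` yields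
`|⟨w,u⟩|² ≤ (‖u‖² - 1 + |⟨w_i,u_i⟩|²)‖w‖²`. Rearranged, this says
`‖u‖² sin²∠(u,w) ≥ 1 - |⟨w_i,u_i⟩|² = sin²∠(u_i,w_i)`.
-/

section Blocks

variable {ι κ : Type*} [Fintype ι] [Fintype κ]

lemma cenorm_eq_norm_toLp (v : ι → ℂ) : cenorm v = ‖WithLp.toLp 2 v‖ := by
  simp [cenorm, EuclideanSpace.norm_eq]

lemma cinner_eq_inner_toLp (w v : ι → ℂ) :
    cinner w v = inner ℂ (WithLp.toLp 2 w) (WithLp.toLp 2 v) := by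
  simp [cinner, PiLp.inner_apply, mul_comm]

lemma norm_cinner_le (w v : ι → ℂ) : ‖cinner w v‖ ≤ cenorm v * cenorm w := by
  rw [cinner_eq_inner_toLp, cenorm_eq_norm_toLp, cenorm_eq_norm_toLp, mul_comm]
  exact norm_inner_le_norm _ _

lemma cenorm_sq (v : ι → ℂ) : cenorm v ^ 2 = ∑ i, ‖v i‖ ^ 2 :=
  Real.sq_sqrt (by positivity)

lemma sq_sinAngle (u w : ι → ℂ) :
    sinAngle u w ^ 2 = 1 - ‖cinner w u‖ ^ 2 / (cenorm u ^ 2 * cenorm w ^ 2) := by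
  refine Real.sq_sqrt (sub_nonneg.mpr (div_le_one_of_le₀ ?_ (by positivity)))
  rw [← mul_pow]
  exact pow_le_pow_left₀ (norm_nonneg _) (norm_cinner_le w u) 2

lemma cenorm_flatten_sq (u : ι → κ → ℂ) :
    cenorm (fun p : ι × κ => u p.1 p.2) ^ 2 = ∑ i, cenorm (u i) ^ 2 := by
  simp only [cenorm_sq, Fintype.sum_prod_type]

lemma cenorm_sq_le_cenorm_flatten_sq (u : ι → κ → ℂ) (i : ι) :
    cenorm (u i) ^ 2 ≤ cenorm (fun p : ι × κ => u p.1 p.2) ^ 2 := by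
  rw [cenorm_flatten_sq]
  exact Finset.single_le_sum (f := fun j => cenorm (u j) ^ 2) (fun j _ => by positivity)
    (Finset.mem_univ i)

lemma cinner_flatten (w u : ι → κ → ℂ) :
    cinner (fun p : ι × κ => w p.1 p.2) (fun p : ι × κ => u p.1 p.2) =
      ∑ i, cinner (w i) (u i) := by
  simp only [cinner, Fintype.sum_prod_type]

lemma norm_cinner_flatten_sq_le (u w : ι → κ → ℂ) (i : ι) (hwi : cenorm (w i) = 1) :
    ‖cinner (fun p : ι × κ => w p.1 p.2) (fun p : ι × κ => u p.1 p.2)‖ ^ 2 ≤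
      (cenorm (fun p : ι × κ => u p.1 p.2) ^ 2 - cenorm (u i) ^ 2 + ‖cinner (w i) (u i)‖ ^ 2) *
        cenorm (fun p : ι × κ => w p.1 p.2) ^ 2 := by
  classical
  set a : ι → ℝ := Function.update (fun j => cenorm (u j)) i ‖cinner (w i) (u i)‖
  have hterm : ∀ j, ‖cinner (w j) (u j)‖ ≤ a j * cenorm (w j) := by
    intro j
    rcases eq_or_ne j i with rfl | hj
    · simp [a, hwi]
    · simpa [a, Function.update_of_ne hj] using norm_cinner_le (w j) (u j)
  have hsum_a : ∑ j, a j ^ 2 =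
      cenorm (fun p : ι × κ => u p.1 p.2) ^ 2 - cenorm (u i) ^ 2 + ‖cinner (w i) (u i)‖ ^ 2 := by
    rw [cenorm_flatten_sq, ← Finset.add_sum_erase _ _ (Finset.mem_univ i),
      ← Finset.add_sum_erase _ _ (Finset.mem_univ i)]
    have : ∀ j ∈ Finset.univ.erase i, a j ^ 2 = cenorm (u j) ^ 2 := fun j hj => by
      simp [a, Function.update_of_ne (Finset.ne_of_mem_erase hj)]
    rw [Finset.sum_congr rfl this]
    simp only [a, Function.update_self]
    ring
  have hle : ‖cinner (fun p : ι × κ => w p.1 p.2) (fun p : ι × κ => u p.1 p.2)‖ ≤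
      ∑ j, a j * cenorm (w j) := by
    rw [cinner_flatten]
    exact (norm_sum_le _ _).trans (Finset.sum_le_sum fun j _ => hterm j)
  calc _ ≤ (∑ j, a j * cenorm (w j)) ^ 2 := pow_le_pow_left₀ (norm_nonneg _) hle 2
    _ ≤ (∑ j, a j ^ 2) * ∑ j, cenorm (w j) ^ 2 := Finset.sum_mul_sq_le_sq_mul_sq _ _ _
    _ = _ := by rw [hsum_a, cenorm_flatten_sq w]

lemma sq_sinAngle_le_cenorm_flatten_sq_mul (u w : ι → κ → ℂ) (i : ι)
    (hui : cenorm (u i) = 1) (hwi : cenorm (w i) = 1) :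
    sinAngle (u i) (w i) ^ 2 ≤
      cenorm (fun p : ι × κ => u p.1 p.2) ^ 2 *
        sinAngle (fun p : ι × κ => u p.1 p.2) (fun p : ι × κ => w p.1 p.2) ^ 2 := by
  have hA := cenorm_sq_le_cenorm_flatten_sq u i
  have hB := cenorm_sq_le_cenorm_flatten_sq w i
  have hC := norm_cinner_flatten_sq_le u w i hwi
  simp only [hui, hwi, one_pow] at hA hB hC
  rw [sq_sinAngle, sq_sinAngle, hui, hwi, mul_sub, ← mul_div_assoc,
    mul_div_mul_left _ _ (by positivity)]
  rw [← div_le_iff₀ (by linarith)] at hC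
  linarith

end Blocks

/-- For block vectors `u, w ∈ ℂ^{dn}` with `‖u_i‖ = ‖w_i‖ = 1`,
`sin²∠(u,w) ≥ sin²∠(u_i,w_i)/‖u‖²`, i.e. `sin∠(u_i,w_i) ≤ ‖u‖ sin∠(u,w)`. -/
theorem stmt3 {d n : ℕ} (u w : Fin d → Fin n → ℂ) (i : Fin d)
    (hui : cenorm (u i) = 1) (hwi : cenorm (w i) = 1) :
    sinAngle (fun p : Fin d × Fin n => u p.1 p.2)
        (fun p : Fin d × Fin n => w p.1 p.2) ^ 2
      ≥ sinAngle (u i) (w i) ^ 2 / (cenorm fun p : Fin d × Fin n => u p.1 p.2) ^ 2 ∧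
    sinAngle (u i) (w i) ≤
      (cenorm fun p : Fin d × Fin n => u p.1 p.2) *
        sinAngle (fun p : Fin d × Fin n => u p.1 p.2)
          (fun p : Fin d × Fin n => w p.1 p.2) := by
  have hsq := sq_sinAngle_le_cenorm_flatten_sq_mul u w i hui hwi
  have hpos : 0 < (cenorm fun p : Fin d × Fin n => u p.1 p.2) ^ 2 := by
    have := cenorm_sq_le_cenorm_flatten_sq u i
    rw [hui] at this
    linarith
  refine ⟨(div_le_iff₀' hpos).mpr hsq, ?_⟩
  rw [← mul_pow] at hsq
  exact (pow_le_pow_iff_left₀ (Real.sqrt_nonneg _)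
    (mul_nonneg (Real.sqrt_nonneg _) (Real.sqrt_nonneg _)) two_ne_zero).mp hsq
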